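/- Bibasic generalization of Entry 1.4.5: Let q, h, t be complex numbers with |q^h| < 1, |q^t| < 1 and |q^{ht}| < 1 (principal complex powers), and let a be a complex number such that all denominators below are nonzero. Then ∑_{j=0}^∞ [(−aq;q^t)_j · (q^h;q^h)_{tj} / (q^t;q^t)_j] · (q^t)^j = [(−aq;q^t)_∞ (q^h;q^h)_∞ / (q^t;q^t)_∞] · ∑_{k=0}^∞ [(q^t;q^t)_{hk} / ((q^h;q^h)_k · (−aq;q^t)_{hk+1})] · (q^h)^k. -/

import Mathlib

open Complex

/-- Finite q-Pochhammer symbol `(A;Q)_k = ∏_{r=0}^{k-1} (1 - A Q^r)`. -/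
noncomputable def qp (A Q : ℂ) (k : ℕ) : ℂ := ∏ r ∈ Finset.range k, (1 - A * Q ^ r)

/-- Infinite q-Pochhammer symbol `(A;Q)_∞ = ∏_{r=0}^{∞} (1 - A Q^r)`. -/
noncomputable def qpInf (A Q : ℂ) : ℂ := ∏' r : ℕ, (1 - A * Q ^ r)

/-- q-Pochhammer symbol with (possibly non-integer) index:
`(A;Q)_{c k} := (A;Q)_∞ / (A R^k;Q)_∞` where `R = Q^c`. -/
noncomputable def qpc (A Q R : ℂ) (k : ℕ) : ℂ := qpInf A Q / qpInf (A * R ^ k) Q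

/-- q-Pochhammer symbol with shifted (possibly non-integer) index:
`(A;Q)_{c k + 1} := (A;Q)_∞ / (A Q R^k;Q)_∞` where `R = Q^c`. -/
noncomputable def qpc1 (A Q R : ℂ) (k : ℕ) : ℂ := qpInf A Q / qpInf (A * Q * R ^ k) Q

/-!
Write `A = -aq`, `Q = q^t`, `H = q^h`, `R = q^{ht}`. Euler's identity
`1/(z;H)_∞ = ∑_k z^k/(H;H)_k` at `z = H R^j` expands `(H;H)_{tj} = (H;H)_∞/(H R^j;H)_∞`, so the
left side becomes a double series in `j, k` with terms
`(A;Q)_j/(Q;Q)_j Q^j · (H;H)_∞/(H;H)_k H^k · R^{jk}`. It converges absolutely, since both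
quotients of q-Pochhammer symbols converge and `‖R‖ ≤ 1`. Summing over `j` first instead, the
q-binomial theorem `∑_j (A;Q)_j/(Q;Q)_j z^j = (Az;Q)_∞/(z;Q)_∞` at `z = Q R^k` gives the right side.

The q-binomial theorem follows from the functional equation `(1 - z) F(z) = (1 - Az) F(Qz)` of
its left side `F`: iterating it `k` times and letting `F(Q^k z) → F(0) = 1`.
-/

open Filter Topology

lemma Filter.Tendsto.exists_forall_norm_le {E : Type*} [SeminormedAddCommGroup E] {u : ℕ → E}
    {l : E} (hu : Tendsto u atTop (𝓝 l)) :
    ∃ M, ∀ n, ‖u n‖ ≤ M := by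
  obtain ⟨M, hM⟩ := hu.norm.bddAbove_range
  exact ⟨M, fun n => hM ⟨n, rfl⟩⟩

section QPochhammer

variable {A Q : ℂ}

lemma qp_succ (n : ℕ) : qp A Q (n + 1) = qp A Q n * (1 - A * Q ^ n) :=
  Finset.prod_range_succ _ _

lemma summable_norm_neg_mul_pow (A : ℂ) (hQ : ‖Q‖ < 1) :
    Summable fun r : ℕ => ‖-(A * Q ^ r)‖ := by
  simpa using (summable_geometric_of_lt_one (norm_nonneg Q) hQ).mul_left ‖A‖

lemma tendsto_qp_qpInf (A : ℂ) (hQ : ‖Q‖ < 1) : Tendsto (qp A Q) atTop (𝓝 (qpInf A Q)) := by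
  have := multipliable_one_add_of_summable (summable_norm_neg_mul_pow A hQ)
  simp only [← sub_eq_add_neg] at this
  exact this.hasProd.tendsto_prod_nat

lemma qpInf_ne_zero (hQ : ‖Q‖ < 1) (hA : ∀ r : ℕ, A * Q ^ r ≠ 1) : qpInf A Q ≠ 0 := by
  have := tprod_one_add_ne_zero_of_summable (fun r => ?_) (summable_norm_neg_mul_pow A hQ)
  · simpa only [qpInf, ← sub_eq_add_neg] using this
  · rw [← sub_eq_add_neg, sub_ne_zero]
    exact (hA r).symm

lemma norm_mul_pow_lt_one (hA : ‖A‖ < 1) (hQ : ‖Q‖ ≤ 1) (r : ℕ) : ‖A * Q ^ r‖ < 1 := by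
  rw [norm_mul, norm_pow]
  exact mul_lt_one_of_nonneg_of_lt_one_left (norm_nonneg A) hA (pow_le_one₀ (norm_nonneg Q) hQ)

lemma qp_ne_zero (hA : ‖A‖ < 1) (hQ : ‖Q‖ ≤ 1) (n : ℕ) : qp A Q n ≠ 0 :=
  Finset.prod_ne_zero_iff.2 fun r _ => sub_ne_zero.2 fun h =>
    (norm_mul_pow_lt_one hA hQ r).ne (by rw [← h, norm_one])

lemma qpInf_ne_zero_of_norm_lt_one (hA : ‖A‖ < 1) (hQ : ‖Q‖ < 1) : qpInf A Q ≠ 0 :=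
  qpInf_ne_zero hQ fun r h => (norm_mul_pow_lt_one hA hQ.le r).ne (by rw [h, norm_one])

lemma exists_forall_norm_qp_div_qp_le (A : ℂ) (hQ : ‖Q‖ < 1) :
    ∃ M, ∀ n, ‖qp A Q n / qp Q Q n‖ ≤ M :=
  ((tendsto_qp_qpInf A hQ).div (tendsto_qp_qpInf Q hQ)
    (qpInf_ne_zero_of_norm_lt_one hQ hQ)).exists_forall_norm_le

lemma exists_forall_norm_qpInf_div_qp_le (hQ : ‖Q‖ < 1) :
    ∃ M, ∀ n, ‖qpInf Q Q / qp Q Q n‖ ≤ M :=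
  (tendsto_const_nhds.div (tendsto_qp_qpInf Q hQ)
    (qpInf_ne_zero_of_norm_lt_one hQ hQ)).exists_forall_norm_le

end QPochhammer

section FunctionalEquation

variable {A Q : ℂ} {c : ℕ → ℂ} {M : ℝ}

lemma summable_norm_mul_pow_of_norm_le (hc : ∀ n, ‖c n‖ ≤ M) {w : ℂ} (hw : ‖w‖ < 1) :
    Summable fun n => ‖c n * w ^ n‖ :=
  .of_nonneg_of_le (fun _ => norm_nonneg _) (fun n => by
    rw [norm_mul, norm_pow]
    exact mul_le_mul_of_nonneg_right (hc n) (by positivity))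
    ((summable_geometric_of_lt_one (norm_nonneg w) hw).mul_left M)

lemma one_sub_mul_tsum_mul_pow (hc : ∀ n, ‖c n‖ ≤ M)
    (hrec : ∀ n, c (n + 1) * (1 - Q ^ (n + 1)) = c n * (1 - A * Q ^ n))
    (hQ : ‖Q‖ ≤ 1) {w : ℂ} (hw : ‖w‖ < 1) :
    (1 - w) * ∑' n, c n * w ^ n = (1 - A * w) * ∑' n, c n * (Q * w) ^ n := by
  have hQw : ‖Q * w‖ < 1 := by simpa [mul_comm] using norm_mul_pow_lt_one hw hQ 1
  have hS := (summable_norm_mul_pow_of_norm_le hc hw).of_norm.hasSum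
  have hT := (summable_norm_mul_pow_of_norm_le hc hQw).of_norm.hasSum
  set S := ∑' n, c n * w ^ n
  set T := ∑' n, c n * (Q * w) ^ n
  -- The recurrence turns term `n + 1` of `S - T` into `w` times term `n` of `S - A T`.
  have hshift := (hasSum_nat_add_iff' 1).2 (hS.sub hT)
  have hrec' : HasSum (fun n => c (n + 1) * w ^ (n + 1) - c (n + 1) * (Q * w) ^ (n + 1))
      (w * S - A * w * T) := by
    have hterm : (fun n => c (n + 1) * w ^ (n + 1) - c (n + 1) * (Q * w) ^ (n + 1)) =
        fun n => w * (c n * w ^ n) - A * w * (c n * (Q * w) ^ n) := by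
      funext n
      linear_combination w ^ (n + 1) * hrec n
    rw [hterm]
    exact (hS.mul_left w).sub (hT.mul_left (A * w))
  have hsum := hshift.unique hrec'
  simp only [Finset.range_one, Finset.sum_singleton, pow_zero, mul_one, sub_self, sub_zero] at hsum
  linear_combination hsum

lemma tsum_mul_pow_mul_qp (hc : ∀ n, ‖c n‖ ≤ M)
    (hrec : ∀ n, c (n + 1) * (1 - Q ^ (n + 1)) = c n * (1 - A * Q ^ n))
    (hQ : ‖Q‖ ≤ 1) {z : ℂ} (hz : ‖z‖ < 1) (k : ℕ) :
    (∑' n, c n * z ^ n) * qp z Q k = qp (A * z) Q k * ∑' n, c n * (Q ^ k * z) ^ n := by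
  induction k with
  | zero => simp [qp]
  | succ k ih =>
    have hfun := one_sub_mul_tsum_mul_pow hc hrec hQ (w := Q ^ k * z)
      (by simpa [mul_comm] using norm_mul_pow_lt_one hz hQ k)
    rw [qp_succ, qp_succ, ← mul_assoc, ih, pow_succ', mul_assoc Q]
    linear_combination qp (A * z) Q k * hfun

lemma tendsto_tsum_mul_pow_mul_pow (hc : ∀ n, ‖c n‖ ≤ M) (hQ : ‖Q‖ < 1) {z : ℂ}
    (hz : ‖z‖ < 1) : Tendsto (fun k : ℕ => ∑' n, c n * (Q ^ k * z) ^ n) atTop (𝓝 (c 0)) := by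
  have hlim : ∀ n, Tendsto (fun k : ℕ => c n * (Q ^ k * z) ^ n) atTop (𝓝 (c n * (0 * z) ^ n)) :=
    fun n => (((tendsto_pow_atTop_nhds_zero_of_norm_lt_one hQ).mul_const z).pow n).const_mul _
  have hbound : ∀ k n, ‖c n * (Q ^ k * z) ^ n‖ ≤ M * ‖z‖ ^ n := fun k n => by
    rw [norm_mul, norm_pow]
    gcongr
    · exact (norm_nonneg _).trans (hc 0)
    · exact hc n
    · rw [norm_mul, norm_pow]
      exact mul_le_of_le_one_left (norm_nonneg z) (pow_le_one₀ (norm_nonneg Q) hQ.le)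
  convert tendsto_tsum_of_dominated_convergence
    ((summable_geometric_of_lt_one (norm_nonneg z) hz).mul_left M) hlim
    (Eventually.of_forall hbound)
  rw [tsum_eq_single 0 fun n hn => by simp [hn]]
  simp

theorem tsum_mul_pow_mul_qpInf (hc : ∀ n, ‖c n‖ ≤ M) (hc0 : c 0 = 1)
    (hrec : ∀ n, c (n + 1) * (1 - Q ^ (n + 1)) = c n * (1 - A * Q ^ n))
    (hQ : ‖Q‖ < 1) {z : ℂ} (hz : ‖z‖ < 1) :
    (∑' n, c n * z ^ n) * qpInf z Q = qpInf (A * z) Q := by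
  refine tendsto_nhds_unique ((tendsto_qp_qpInf z hQ).const_mul _) ?_
  rw [← mul_one (qpInf (A * z) Q), ← hc0]
  exact ((tendsto_qp_qpInf _ hQ).mul (tendsto_tsum_mul_pow_mul_pow hc hQ hz)).congr fun k =>
    (tsum_mul_pow_mul_qp hc hrec hQ.le hz k).symm

end FunctionalEquation

section QBinomial

variable {Q : ℂ}

theorem tsum_qp_div_qp_mul_pow (A : ℂ) (hQ : ‖Q‖ < 1) {z : ℂ} (hz : ‖z‖ < 1) :
    ∑' n, qp A Q n / qp Q Q n * z ^ n = qpInf (A * z) Q / qpInf z Q := by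
  obtain ⟨M, hM⟩ := exists_forall_norm_qp_div_qp_le A hQ
  rw [eq_div_iff (qpInf_ne_zero_of_norm_lt_one hz hQ)]
  refine tsum_mul_pow_mul_qpInf hM (by simp [qp]) (fun n => ?_) hQ hz
  have hn := qp_ne_zero hQ hQ.le (n + 1)
  rw [qp_succ] at hn
  have hfac : 1 - Q * Q ^ n ≠ 0 := right_ne_zero_of_mul hn
  rw [qp_succ, qp_succ, pow_succ', div_mul_eq_mul_div, mul_div_mul_right _ _ hfac]
  ring

theorem tsum_pow_div_qp (hQ : ‖Q‖ < 1) {z : ℂ} (hz : ‖z‖ < 1) :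
    ∑' n, z ^ n / qp Q Q n = (qpInf z Q)⁻¹ := by
  simpa [div_eq_inv_mul, qp, qpInf] using tsum_qp_div_qp_mul_pow 0 hQ hz

end QBinomial

lemma summable_mul_pow_mul_mul_pow_mul_pow {u v : ℕ → ℂ} {U V : ℝ} {x y r : ℂ}
    (hu : ∀ j, ‖u j‖ ≤ U) (hv : ∀ k, ‖v k‖ ≤ V) (hx : ‖x‖ < 1) (hy : ‖y‖ < 1) (hr : ‖r‖ ≤ 1) :
    Summable (Function.uncurry fun j k => u j * x ^ j * (v k * y ^ k) * r ^ (j * k)) := by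
  refine .of_norm_bounded ((summable_norm_mul_pow_of_norm_le hu hx).mul_norm
    (summable_norm_mul_pow_of_norm_le hv hy)) fun ⟨j, k⟩ => ?_
  rw [Function.uncurry_apply_pair, norm_mul _ (r ^ _), norm_pow]
  exact mul_le_of_le_one_right (norm_nonneg _) (pow_le_one₀ (norm_nonneg r) hr)

section Bibasic

variable {A Q H R : ℂ}

lemma qp_mul_qpc_div_qp_mul_pow_eq_tsum (hH : ‖H‖ < 1) (hR : ‖R‖ ≤ 1) (j : ℕ) :
    qp A Q j * qpc H H R j / qp Q Q j * Q ^ j =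
      ∑' k, qp A Q j / qp Q Q j * Q ^ j * (qpInf H H / qp H H k * H ^ k) * R ^ (j * k) := by
  calc qp A Q j * qpc H H R j / qp Q Q j * Q ^ j
      = qp A Q j / qp Q Q j * Q ^ j * qpInf H H * ∑' k, (H * R ^ j) ^ k / qp H H k := by
        rw [tsum_pow_div_qp hH (norm_mul_pow_lt_one hH hR j), qpc]
        ring
    _ = _ := by
        rw [← tsum_mul_left]
        exact tsum_congr fun k => by rw [mul_pow, ← pow_mul]; ring

lemma qpInf_mul_qpc_div_mul_pow_eq_tsum (hA : qpInf A Q ≠ 0) (hQ : ‖Q‖ < 1) (hR : ‖R‖ ≤ 1)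
    (k : ℕ) :
    qpInf A Q * qpInf H H / qpInf Q Q * (qpc Q Q R k / (qp H H k * qpc1 A Q R k) * H ^ k) =
      ∑' j, qp A Q j / qp Q Q j * Q ^ j * (qpInf H H / qp H H k * H ^ k) * R ^ (j * k) := by
  have hQR := norm_mul_pow_lt_one hQ hR k
  calc qpInf A Q * qpInf H H / qpInf Q Q * (qpc Q Q R k / (qp H H k * qpc1 A Q R k) * H ^ k)
      = qpInf H H / qp H H k * H ^ k * ∑' j, qp A Q j / qp Q Q j * (Q * R ^ k) ^ j := by
        rw [tsum_qp_div_qp_mul_pow A hQ hQR, qpc, qpc1, ← mul_assoc A]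
        have hQQ := qpInf_ne_zero_of_norm_lt_one hQ hQ
        field_simp
    _ = _ := by
        rw [← tsum_mul_left]
        exact tsum_congr fun j => by rw [mul_pow, ← pow_mul, mul_comm k]; ring

end Bibasic

theorem entry_1_4_5_bibasic_general (q h t a : ℂ)
    (hqh : ‖q ^ h‖ < 1) (hqt : ‖q ^ t‖ < 1)
    (hqht : ‖q ^ (h * t)‖ < 1)
    (h5 : ∀ k : ℕ, qpc1 (-a * q) (q ^ t) (q ^ (h * t)) k ≠ 0) :
    ∑' j : ℕ, (qp (-a * q) (q ^ t) j * qpc (q ^ h) (q ^ h) (q ^ (h * t)) j /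
        qp (q ^ t) (q ^ t) j) * (q ^ t) ^ j
    = (qpInf (-a * q) (q ^ t) * qpInf (q ^ h) (q ^ h) / qpInf (q ^ t) (q ^ t)) *
      ∑' k : ℕ, (qpc (q ^ t) (q ^ t) (q ^ (h * t)) k /
        (qp (q ^ h) (q ^ h) k * qpc1 (-a * q) (q ^ t) (q ^ (h * t)) k)) * (q ^ h) ^ k := by
  have hA : qpInf (-a * q) (q ^ t) ≠ 0 := fun h0 => h5 0 (by rw [qpc1, h0, zero_div])
  obtain ⟨U, hU⟩ := exists_forall_norm_qp_div_qp_le (-a * q) hqt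
  obtain ⟨V, hV⟩ := exists_forall_norm_qpInf_div_qp_le hqh
  rw [tsum_congr (qp_mul_qpc_div_qp_mul_pow_eq_tsum hqh hqht.le), ← tsum_mul_left,
    tsum_congr (qpInf_mul_qpc_div_mul_pow_eq_tsum hA hqt hqht.le)]
  exact (summable_mul_pow_mul_mul_pow_mul_pow hU hV hqt hqh hqht.le).tsum_comm.symm

/-- bibasic generalization of Entry 1.4.5. -/
theorem entry_1_4_5_bibasic (q h t a : ℂ)
    (hqh : ‖q ^ h‖ < 1) (hqt : ‖q ^ t‖ < 1)
    (hqht : ‖q ^ (h * t)‖ < 1)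
    (h1 : ∀ j : ℕ, qp (q ^ t) (q ^ t) j ≠ 0)
    (h2 : ∀ j : ℕ, qpInf (q ^ h * (q ^ (h * t)) ^ j) (q ^ h) ≠ 0)
    (h3 : qpInf (q ^ t) (q ^ t) ≠ 0)
    (h4 : ∀ k : ℕ, qp (q ^ h) (q ^ h) k ≠ 0)
    (h5 : ∀ k : ℕ, qpc1 (-a * q) (q ^ t) (q ^ (h * t)) k ≠ 0)
    (h6 : ∀ k : ℕ, qpInf (q ^ t * (q ^ (h * t)) ^ k) (q ^ t) ≠ 0)
    (h7 : ∀ k : ℕ, qpInf (-a * q * q ^ t * (q ^ (h * t)) ^ k) (q ^ t) ≠ 0) :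
    ∑' j : ℕ, (qp (-a * q) (q ^ t) j * qpc (q ^ h) (q ^ h) (q ^ (h * t)) j /
        qp (q ^ t) (q ^ t) j) * (q ^ t) ^ j
    = (qpInf (-a * q) (q ^ t) * qpInf (q ^ h) (q ^ h) / qpInf (q ^ t) (q ^ t)) *
      ∑' k : ℕ, (qpc (q ^ t) (q ^ t) (q ^ (h * t)) k /
        (qp (q ^ h) (q ^ h) k * qpc1 (-a * q) (q ^ t) (q ^ (h * t)) k)) * (q ^ h) ^ k :=
  entry_1_4_5_bibasic_general q h t a hqh hqt hqht h5
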